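/- arXiv:2301.13541 — 2 statements merged into one kernel-verified Lean document; each statement's English description precedes it below -/
import Mathlib

section
/- Let k ≥ 1 and let A₁, …, A_k, Ã₁, …, Ã_k ∈ ℝ^{m×n} be entrywise nonnegative with Ãᵢ ⊵_ε Aᵢ for every i ∈ {1,…,k}. Then ∑_{i=1}^k Ãᵢ ⊵_ε ∑_{i=1}^k Aᵢ. -/
open Matrix ComplexOrder

/-- Row-sum degree matrix of `A`. -/
def rowDeg {α β : Type*} [Fintype α] [Fintype β] [DecidableEq α]
    (A : Matrix α β ℝ) : Matrix α α ℝ :=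
  Matrix.diagonal fun i => ∑ j, A i j

/-- Column-sum degree matrix of `A`. -/
def colDeg {α β : Type*} [Fintype α] [Fintype β] [DecidableEq β]
    (A : Matrix α β ℝ) : Matrix β β ℝ :=
  Matrix.diagonal fun j => ∑ i, A i j

/-- The error matrix `E := D_row − A · D_col⁻ · Aᵀ` (with `0⁻¹ = 0`). -/
noncomputable def errE {α β : Type*} [Fintype α] [Fintype β] [DecidableEq α] [DecidableEq β]
    (A : Matrix α β ℝ) : Matrix α α ℝ :=
  rowDeg A - A * Matrix.diagonal (fun j => (∑ i, A i j)⁻¹) * Aᵀ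

/-- The error matrix `F := D_col − Aᵀ · D_row⁻ · A` (with `0⁻¹ = 0`). -/
noncomputable def errF {α β : Type*} [Fintype α] [Fintype β] [DecidableEq α] [DecidableEq β]
    (A : Matrix α β ℝ) : Matrix β β ℝ :=
  colDeg A - Aᵀ * Matrix.diagonal (fun i => (∑ j, A i j)⁻¹) * A

/-- `Ã ⊵_ε A`: `Ã` is an `ε`-SV approximation of the entrywise-nonnegative matrix `A`,
with degree matrices given by the row and column sums of `A` (real matrices viewed as
complex for the bilinear-form inequality). -/
noncomputable def IsSVgApprox {α β : Type*} [Fintype α] [Fintype β] [DecidableEq α]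
    [DecidableEq β] (ε : ℝ) (A Atil : Matrix α β ℝ) : Prop :=
  (errE A).PosSemidef ∧ (errF A).PosSemidef ∧
  ∀ (x : α → ℂ) (y : β → ℂ),
    ‖star x ⬝ᵥ ((Atil - A).map fun a => (a : ℂ)).mulVec y‖ ≤
      ε / 4 * ((star x ⬝ᵥ ((errE A).map fun a => (a : ℂ)).mulVec x).re +
        (star y ⬝ᵥ ((errF A).map fun a => (a : ℂ)).mulVec y).re)

/-! The quadratic form of `E = D_row − A D_col⁻ Aᵀ` is a sum over the columns `j` of `A` of the
Cauchy–Schwarz defects `∑ᵢ Aᵢⱼ |xᵢ|² − |∑ᵢ Aᵢⱼ xᵢ|² / ∑ᵢ Aᵢⱼ`. By Sedrakyan's inequality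
`|∑ₖ cₖ|² / ∑ₖ wₖ ≤ ∑ₖ |cₖ|² / wₖ` each defect is superadditive in `A`, so `E (∑ₖ Aₖ) ⪰ ∑ₖ E Aₖ`,
and likewise for `F` by transposition. Summing the bounds for the pieces `Ãₖ − Aₖ` gives the
claim. -/

open Finset

theorem inv_sum_mul_norm_sum_sq_le {ι E : Type*} [SeminormedAddCommGroup E] (s : Finset ι)
    (w : ι → ℝ) (c : ι → E) (hw : ∀ i ∈ s, 0 ≤ w i) (hc : ∀ i ∈ s, w i = 0 → c i = 0) :
    (∑ i ∈ s, w i)⁻¹ * ‖∑ i ∈ s, c i‖ ^ 2 ≤ ∑ i ∈ s, (w i)⁻¹ * ‖c i‖ ^ 2 := by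
  have hterm : ∀ i ∈ s, 0 ≤ (w i)⁻¹ * ‖c i‖ ^ 2 := fun i hi => by
    have := hw i hi; positivity
  obtain hzero | hpos := (sum_nonneg hw).eq_or_lt
  · rw [← hzero, _root_.inv_zero, zero_mul]
    exact sum_nonneg hterm
  rw [inv_mul_le_iff₀ hpos, mul_comm]
  calc ‖∑ i ∈ s, c i‖ ^ 2 ≤ (∑ i ∈ s, ‖c i‖) ^ 2 := by gcongr; exact norm_sum_le _ _
    _ ≤ _ := sum_sq_le_sum_mul_sum_of_sq_le_mul s hterm hw fun i hi => by
      obtain hwi | hwi := (hw i hi).eq_or_lt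
      · simp [hc i hi hwi.symm]
      · rw [mul_comm, ← mul_assoc, mul_inv_cancel₀ hwi.ne', one_mul]

section ErrorMatrices

variable {α β ι 𝕜 : Type*} [Fintype α] [Fintype ι] [RCLike 𝕜]

noncomputable def colDefect (A : Matrix α β ℝ) (x : α → 𝕜) (j : β) : ℝ :=
  ∑ i, A i j * ‖x i‖ ^ 2 - (∑ i, A i j)⁻¹ * ‖∑ i, (A i j : 𝕜) * x i‖ ^ 2

theorem sum_colDefect_le_colDefect_sum {A : ι → Matrix α β ℝ} (hA : ∀ i a b, 0 ≤ A i a b)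
    (x : α → 𝕜) (j : β) :
    ∑ i, colDefect (A i) x j ≤ colDefect (∑ i, A i) x j := by
  have hw : ∀ i ∈ univ, 0 ≤ ∑ a, A i a j := fun i _ => sum_nonneg fun a _ => hA i a j
  have hc : ∀ i ∈ univ, ∑ a, A i a j = 0 → ∑ a, (A i a j : 𝕜) * x a = 0 := fun i _ h => by
    rw [sum_eq_zero_iff_of_nonneg fun a _ => hA i a j] at h
    simp [h]
  have hsedrakyan := inv_sum_mul_norm_sum_sq_le univ _ _ hw hc
  simp only [colDefect, sum_sub_distrib, Matrix.sum_apply]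
  push_cast
  simp only [sum_mul, sum_comm (γ := ι)] at hsedrakyan ⊢
  linarith

variable [Fintype β] [DecidableEq α] [DecidableEq β]

theorem errF_eq_errE_transpose (A : Matrix α β ℝ) : errF A = errE Aᵀ := by
  rw [errE, errF, transpose_transpose]
  rfl

theorem errE_isHermitian (A : Matrix α β ℝ) : (errE A).IsHermitian := by
  rw [IsHermitian, conjTranspose_eq_transpose_of_trivial, errE, rowDeg, transpose_sub,
    diagonal_transpose, transpose_mul, transpose_mul, transpose_transpose, diagonal_transpose,
    Matrix.mul_assoc]

theorem errE_apply (A : Matrix α β ℝ) (i i' : α) :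
    errE A i i' = (if i = i' then ∑ j, A i j else 0) - ∑ j, A i j * (∑ l, A l j)⁻¹ * A i' j := by
  simp [errE, rowDeg, diagonal_apply, mul_apply]

theorem errE_quadForm_eq_sum_colDefect (A : Matrix α β ℝ) (x : α → 𝕜) :
    star x ⬝ᵥ (errE A).map (fun a => (a : 𝕜)) *ᵥ x = ((∑ j, colDefect A x j : ℝ) : 𝕜) := by
  have hsq : ∀ z : 𝕜, (‖z‖ : 𝕜) ^ 2 = star z * z := fun z => by
    rw [RCLike.star_def, RCLike.conj_mul]
  simp only [colDefect, dotProduct, mulVec, map_apply, errE_apply, Pi.star_apply]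
  push_cast [apply_ite (fun r : ℝ => (r : 𝕜))]
  simp only [hsq, star_sum, star_mul', RCLike.star_def, RCLike.conj_ofReal, sub_mul, mul_sub,
    ite_mul, zero_mul, sum_sub_distrib, sum_ite_eq, mem_univ, if_true, mul_sum, sum_mul]
  congr 1
  · rw [sum_comm]
    exact sum_congr rfl fun _ _ => sum_congr rfl fun _ _ => by ring
  · refine (sum_comm.trans (sum_congr rfl fun _ _ => sum_comm)).trans (sum_comm.trans ?_)
    exact sum_congr rfl fun _ _ => sum_congr rfl fun _ _ => sum_congr rfl fun _ _ => by ring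

theorem sum_errE_quadForm_le {A : ι → Matrix α β ℝ} (hA : ∀ i a b, 0 ≤ A i a b) (x : α → 𝕜) :
    ∑ i, RCLike.re (star x ⬝ᵥ (errE (A i)).map (fun a => (a : 𝕜)) *ᵥ x) ≤
      RCLike.re (star x ⬝ᵥ (errE (∑ i, A i)).map (fun a => (a : 𝕜)) *ᵥ x) := by
  simp only [errE_quadForm_eq_sum_colDefect, RCLike.ofReal_re]
  rw [sum_comm]
  exact sum_le_sum fun j _ => sum_colDefect_le_colDefect_sum hA x j

theorem errE_sum_posSemidef {A : ι → Matrix α β ℝ}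
    (hA : ∀ i a b, 0 ≤ A i a b) (hE : ∀ i, (errE (A i)).PosSemidef) :
    (errE (∑ i, A i)).PosSemidef := by
  refine .of_dotProduct_mulVec_nonneg (errE_isHermitian _) fun x => ?_
  have hsum := sum_errE_quadForm_le hA x
  simp only [RCLike.ofReal_real_eq_id, map_id, RCLike.re_to_real] at hsum
  exact (sum_nonneg fun i _ => (hE i).dotProduct_mulVec_nonneg x).trans hsum

theorem errF_sum_posSemidef {A : ι → Matrix α β ℝ}
    (hA : ∀ i a b, 0 ≤ A i a b) (hF : ∀ i, (errF (A i)).PosSemidef) :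
    (errF (∑ i, A i)).PosSemidef := by
  simp only [errF_eq_errE_transpose, transpose_sum] at hF ⊢
  exact errE_sum_posSemidef (fun i a b => hA i b a) hF

theorem sum_errF_quadForm_le {A : ι → Matrix α β ℝ} (hA : ∀ i a b, 0 ≤ A i a b) (y : β → 𝕜) :
    ∑ i, RCLike.re (star y ⬝ᵥ (errF (A i)).map (fun a => (a : 𝕜)) *ᵥ y) ≤
      RCLike.re (star y ⬝ᵥ (errF (∑ i, A i)).map (fun a => (a : 𝕜)) *ᵥ y) := by
  simp only [errF_eq_errE_transpose, transpose_sum]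
  exact sum_errE_quadForm_le (fun i a b => hA i b a) y

theorem IsSVgApprox.sum {ε : ℝ} (hε : 0 ≤ ε)
    {A Atil : ι → Matrix α β ℝ} (hA : ∀ i a b, 0 ≤ A i a b)
    (h : ∀ i, IsSVgApprox ε (A i) (Atil i)) : IsSVgApprox ε (∑ i, A i) (∑ i, Atil i) := by
  refine ⟨errE_sum_posSemidef hA fun i => (h i).1, errF_sum_posSemidef hA fun i => (h i).2.1,
    fun x y => ?_⟩
  calc ‖star x ⬝ᵥ ((∑ i, Atil i) - ∑ i, A i).map (fun a => (a : ℂ)) *ᵥ y‖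
      = ‖∑ i, star x ⬝ᵥ (Atil i - A i).map (fun a => (a : ℂ)) *ᵥ y‖ := by
        rw [← sum_sub_distrib, ← dotProduct_sum, ← sum_mulVec]
        congr 3
        ext a b
        simp [Matrix.sum_apply]
    _ ≤ ∑ i, ‖star x ⬝ᵥ (Atil i - A i).map (fun a => (a : ℂ)) *ᵥ y‖ := norm_sum_le _ _
    _ ≤ ∑ i, ε / 4 * ((star x ⬝ᵥ (errE (A i)).map (fun a => (a : ℂ)) *ᵥ x).re +
          (star y ⬝ᵥ (errF (A i)).map (fun a => (a : ℂ)) *ᵥ y).re) :=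
        sum_le_sum fun i _ => (h i).2.2 x y
    _ = ε / 4 * (∑ i, (star x ⬝ᵥ (errE (A i)).map (fun a => (a : ℂ)) *ᵥ x).re +
          ∑ i, (star y ⬝ᵥ (errF (A i)).map (fun a => (a : ℂ)) *ᵥ y).re) := by
        rw [← sum_add_distrib, mul_sum]
    _ ≤ _ := by
        gcongr
        exacts [sum_errE_quadForm_le hA x, sum_errF_quadForm_le hA y]

end ErrorMatrices

theorem stmt_16_general {m n : ℕ} (k : ℕ)
    (A Atil : Fin k → Matrix (Fin m) (Fin n) ℝ)
    (hA : ∀ i, ∀ a b, 0 ≤ A i a b)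
    (ε : ℝ) (hε : 0 ≤ ε)
    (h : ∀ i, IsSVgApprox ε (A i) (Atil i)) :
    IsSVgApprox ε (∑ i, A i) (∑ i, Atil i) :=
  IsSVgApprox.sum hε hA h

/-- SV approximation of nonnegative matrices is additive: if `Ãᵢ ⊵_ε Aᵢ`
for each `i`, then `∑ᵢ Ãᵢ ⊵_ε ∑ᵢ Aᵢ`. -/
theorem stmt_16 {m n : ℕ} (k : ℕ) (hk : 1 ≤ k)
    (A Atil : Fin k → Matrix (Fin m) (Fin n) ℝ)
    (hA : ∀ i, ∀ a b, 0 ≤ A i a b) (hAtil : ∀ i, ∀ a b, 0 ≤ Atil i a b)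
    (ε : ℝ) (hε : 0 ≤ ε)
    (h : ∀ i, IsSVgApprox ε (A i) (Atil i)) :
    IsSVgApprox ε (∑ i, A i) (∑ i, Atil i) :=
  stmt_16_general k A Atil hA ε hε h
end

section
/- Let A ∈ ℝ^{m×n} be entrywise nonnegative, let L := [[0_{n×n}, Aᵀ],[A, 0_{m×m}]] ∈ ℝ^{(n+m)×(n+m)}, and suppose Ã ∈ ℝ^{(n+m)×(n+m)} is entrywise nonnegative with Ã ⊵_ε L. Writing Ã in blocks conforming with L as Ã = [[Ã₁₁, Ã₁₂],[Ã₂₁, Ã₂₂]] with Ã₁₁ ∈ ℝ^{n×n}, Ã₁₂ ∈ ℝ^{n×m}, Ã₂₁ ∈ ℝ^{m×n}, Ã₂₂ ∈ ℝ^{m×m}, the following hold: (1) Ã₁₁ = 0 and Ã₂₂ = 0; (2) Ã₂₁ ⊵_ε A and Ã₁₂ ⊵_ε Aᵀ. -/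
open Matrix ComplexOrder

/-! The error matrices of the bipartite lift `L` are block diagonal, `E_L = F_L = diag(F_A, E_A)`,
and for nonnegative `A` the all-ones vector lies in the kernels of `E_A` and `F_A`. Testing the SV
inequality for `L` with `x = y = 𝟙` supported on one side therefore bounds the total mass of the
corresponding diagonal block of `Ã` by `0`, and nonnegativity forces the block to vanish. Testing
it with `x` and `y` supported on opposite sides isolates one off-diagonal block and yields exactly
the SV inequality for `Ã₂₁` against `A`, resp. `Ã₁₂` against `Aᵀ`; the positive semidefiniteness
of `E_A` and `F_A` is inherited from the diagonal blocks of `E_L`. -/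

section
variable {α β γ δ : Type*} [Fintype α] [Fintype β] [Fintype γ] [Fintype δ]

def sesqForm (M : Matrix α β ℝ) (x : α → ℂ) (y : β → ℂ) : ℂ :=
  star x ⬝ᵥ M.map (fun a => (a : ℂ)) *ᵥ y

theorem isSVgApprox_iff [DecidableEq α] [DecidableEq β] {ε : ℝ} {A Atil : Matrix α β ℝ} :
    IsSVgApprox ε A Atil ↔ (errE A).PosSemidef ∧ (errF A).PosSemidef ∧
      ∀ x y, ‖sesqForm (Atil - A) x y‖ ≤
        ε / 4 * ((sesqForm (errE A) x x).re + (sesqForm (errF A) y y).re) :=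
  Iff.rfl

@[simp] theorem sesqForm_zero_left (M : Matrix α β ℝ) (y : β → ℂ) : sesqForm M 0 y = 0 := by
  simp [sesqForm]

@[simp] theorem sesqForm_zero_right (M : Matrix α β ℝ) (x : α → ℂ) : sesqForm M x 0 = 0 := by
  simp [sesqForm]

@[simp] theorem sesqForm_zero (x : α → ℂ) (y : β → ℂ) : sesqForm (0 : Matrix α β ℝ) x y = 0 := by
  simp [sesqForm]

theorem sesqForm_fromBlocks (P : Matrix α γ ℝ) (Q : Matrix α δ ℝ) (R : Matrix β γ ℝ)
    (S : Matrix β δ ℝ) (x₁ : α → ℂ) (x₂ : β → ℂ) (y₁ : γ → ℂ) (y₂ : δ → ℂ) :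
    sesqForm (fromBlocks P Q R S) (Sum.elim x₁ x₂) (Sum.elim y₁ y₂) =
      sesqForm P x₁ y₁ + sesqForm Q x₁ y₂ + (sesqForm R x₂ y₁ + sesqForm S x₂ y₂) := by
  have hstar : star (Sum.elim x₁ x₂) = Sum.elim (star x₁) (star x₂) := by
    ext (i | i) <;> rfl
  simp only [sesqForm, fromBlocks_map, fromBlocks_mulVec, hstar, sumElim_dotProduct_sumElim,
    dotProduct_add, Sum.elim_comp_inl, Sum.elim_comp_inr]

theorem sesqForm_one_one (M : Matrix α β ℝ) : sesqForm M 1 1 = ((∑ i, ∑ j, M i j : ℝ) : ℂ) := by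
  simp [sesqForm, mulVec, dotProduct]

theorem sesqForm_one_right_of_mulVec_one (M : Matrix α β ℝ) (hM : M *ᵥ 1 = 0) (x : α → ℂ) :
    sesqForm M x 1 = 0 := by
  have : M.map (fun a => (a : ℂ)) *ᵥ 1 = 0 := by
    ext i
    have := congrFun hM i
    simp only [mulVec, dotProduct, map_apply, Pi.one_apply, mul_one, Pi.zero_apply] at this ⊢
    exact_mod_cast this
  simp [sesqForm, this]

theorem eq_zero_of_norm_sesqForm_one_one_le_zero {M : Matrix α β ℝ} (hM : ∀ i j, 0 ≤ M i j)
    (h : ‖sesqForm M 1 1‖ ≤ 0) : M = 0 := by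
  rw [sesqForm_one_one, Complex.norm_real, norm_le_zero_iff] at h
  have hrows := (Fintype.sum_eq_zero_iff_of_nonneg fun i => Fintype.sum_nonneg (hM i)).1 h
  ext i j
  exact congrFun ((Fintype.sum_eq_zero_iff_of_nonneg (hM i)).1 (congrFun hrows i)) j

end

section
variable {α β : Type*} [Fintype α] [Fintype β] [DecidableEq α] [DecidableEq β]

theorem errE_transpose (A : Matrix α β ℝ) : errE Aᵀ = errF A := by
  simp [errE, errF, rowDeg, colDeg]

theorem errF_transpose (A : Matrix α β ℝ) : errF Aᵀ = errE A := by
  simp [errE, errF, rowDeg, colDeg]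

theorem errE_fromBlocks_zero_zero (B : Matrix α β ℝ) (C : Matrix β α ℝ) :
    errE (fromBlocks 0 B C 0) = fromBlocks (errE B) 0 0 (errE C) := by
  have hrow : (fun s => ∑ t, fromBlocks 0 B C 0 s t) =
      Sum.elim (fun i => ∑ j, B i j) (fun j => ∑ i, C j i) := by
    ext (i | j) <;> simp [Fintype.sum_sum_type]
  have hcol : (fun t => (∑ s, fromBlocks 0 B C 0 s t)⁻¹) =
      Sum.elim (fun i => (∑ j, C j i)⁻¹) (fun j => (∑ i, B i j)⁻¹) := by
    ext (i | j) <;> simp [Fintype.sum_sum_type]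
  simp only [errE, rowDeg, hrow, hcol, ← fromBlocks_diagonal, fromBlocks_transpose,
    fromBlocks_multiply]
  ext (i | i) (j | j) <;> simp [diagonal_apply]

theorem errF_fromBlocks_zero_zero (B : Matrix α β ℝ) (C : Matrix β α ℝ) :
    errF (fromBlocks 0 B C 0) = fromBlocks (errF C) 0 0 (errF B) := by
  simp only [← errE_transpose, fromBlocks_transpose, transpose_zero, errE_fromBlocks_zero_zero]

theorem errF_mulVec_one {A : Matrix α β ℝ} (hA : ∀ i j, 0 ≤ A i j) : errF A *ᵥ 1 = 0 := by
  have hnormalize : Aᵀ *ᵥ (fun i => (∑ k, A i k)⁻¹ * ∑ k, A i k) = Aᵀ *ᵥ 1 := by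
    ext j
    refine Finset.sum_congr rfl fun i _ => ?_
    -- a row with zero sum vanishes, so the junk value `0⁻¹ = 0` does no harm
    rcases eq_or_ne (∑ k, A i k) 0 with h | h
    · simp [(Fintype.sum_eq_zero_iff_of_nonneg (hA i)).1 h]
    · simp [h]
  have hrowSums : A *ᵥ 1 = fun i => ∑ k, A i k := by
    ext i
    simp [mulVec, dotProduct]
  rw [errF, colDeg, sub_mulVec, ← mulVec_mulVec, ← mulVec_mulVec, hrowSums,
    funext (mulVec_diagonal (fun i => (∑ k, A i k)⁻¹) _), hnormalize, sub_eq_zero]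
  ext j
  simp [mulVec, dotProduct, diagonal_apply]

theorem errE_mulVec_one {A : Matrix α β ℝ} (hA : ∀ i j, 0 ≤ A i j) : errE A *ᵥ 1 = 0 := by
  rw [← errF_transpose]
  exact errF_mulVec_one fun i j => hA j i

theorem norm_sesqForm_toBlocks_le {ε : ℝ} {A : Matrix β α ℝ} {Atil : Matrix (α ⊕ β) (α ⊕ β) ℝ}
    (hSV : IsSVgApprox ε (fromBlocks 0 Aᵀ A 0) Atil)
    (x₁ : α → ℂ) (x₂ : β → ℂ) (y₁ : α → ℂ) (y₂ : β → ℂ) :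
    ‖sesqForm Atil.toBlocks₁₁ x₁ y₁ + sesqForm (Atil.toBlocks₁₂ - Aᵀ) x₁ y₂ +
        (sesqForm (Atil.toBlocks₂₁ - A) x₂ y₁ + sesqForm Atil.toBlocks₂₂ x₂ y₂)‖ ≤
      ε / 4 * ((sesqForm (errF A) x₁ x₁ + sesqForm (errE A) x₂ x₂).re +
        (sesqForm (errF A) y₁ y₁ + sesqForm (errE A) y₂ y₂).re) := by
  have hdiff : Atil - fromBlocks 0 Aᵀ A 0 = fromBlocks Atil.toBlocks₁₁ (Atil.toBlocks₁₂ - Aᵀ)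
      (Atil.toBlocks₂₁ - A) Atil.toBlocks₂₂ := by
    conv_lhs => rw [← fromBlocks_toBlocks Atil]
    ext (i | i) (j | j) <;> simp
  have h := (isSVgApprox_iff.1 hSV).2.2 (Sum.elim x₁ x₂) (Sum.elim y₁ y₂)
  rwa [hdiff, errE_fromBlocks_zero_zero, errF_fromBlocks_zero_zero, errE_transpose,
    sesqForm_fromBlocks, sesqForm_fromBlocks, sesqForm_fromBlocks, sesqForm_zero, sesqForm_zero,
    sesqForm_zero, sesqForm_zero, add_zero, zero_add, add_zero, zero_add] at h

end

theorem stmt_18_general {m n : ℕ} (A : Matrix (Fin m) (Fin n) ℝ) (hA : ∀ i j, 0 ≤ A i j)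
    (Atil : Matrix (Fin n ⊕ Fin m) (Fin n ⊕ Fin m) ℝ)
    (hAtil : ∀ i j, 0 ≤ Atil i j)
    (ε : ℝ)
    (hSV : IsSVgApprox ε (Matrix.fromBlocks 0 Aᵀ A 0) Atil) :
    (Atil.toBlocks₁₁ = 0 ∧ Atil.toBlocks₂₂ = 0) ∧
    IsSVgApprox ε A Atil.toBlocks₂₁ ∧
    IsSVgApprox ε Aᵀ Atil.toBlocks₁₂ := by
  have hblock := norm_sesqForm_toBlocks_le hSV
  have hF1 := sesqForm_one_right_of_mulVec_one _ (errF_mulVec_one hA)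
  have hE1 := sesqForm_one_right_of_mulVec_one _ (errE_mulVec_one hA)
  have h11 : Atil.toBlocks₁₁ = 0 := eq_zero_of_norm_sesqForm_one_one_le_zero
    (fun i j => hAtil _ _) (by simpa [hF1] using hblock 1 0 1 0)
  have h22 : Atil.toBlocks₂₂ = 0 := eq_zero_of_norm_sesqForm_one_one_le_zero
    (fun i j => hAtil _ _) (by simpa [hE1] using hblock 0 1 0 1)
  obtain ⟨hE, -, -⟩ := hSV
  rw [errE_fromBlocks_zero_zero, errE_transpose] at hE
  have hFA : (errF A).PosSemidef := hE.submatrix Sum.inl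
  have hEA : (errE A).PosSemidef := hE.submatrix Sum.inr
  refine ⟨⟨h11, h22⟩, isSVgApprox_iff.2 ⟨hEA, hFA, fun x y => by simpa using hblock 0 x y 0⟩, ?_⟩
  rw [isSVgApprox_iff, errE_transpose, errF_transpose]
  exact ⟨hFA, hEA, fun x y => by simpa using hblock x 0 0 y⟩

/-- any nonnegative SV sparsifier of the symmetric bipartite lift
`L = [[0, Aᵀ],[A, 0]]` of a nonnegative matrix `A` must itself be bipartite (its diagonal
blocks vanish), and its off-diagonal blocks SV-approximate `A` and `Aᵀ` respectively. -/
theorem stmt_18 {m n : ℕ} (A : Matrix (Fin m) (Fin n) ℝ) (hA : ∀ i j, 0 ≤ A i j)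
    (Atil : Matrix (Fin n ⊕ Fin m) (Fin n ⊕ Fin m) ℝ)
    (hAtil : ∀ i j, 0 ≤ Atil i j)
    (ε : ℝ) (hε : 0 ≤ ε)
    (hSV : IsSVgApprox ε (Matrix.fromBlocks 0 Aᵀ A 0) Atil) :
    (Atil.toBlocks₁₁ = 0 ∧ Atil.toBlocks₂₂ = 0) ∧
    IsSVgApprox ε A Atil.toBlocks₂₁ ∧
    IsSVgApprox ε Aᵀ Atil.toBlocks₁₂ :=
  stmt_18_general A hA Atil hAtil ε hSV
end
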